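/- Let H be a real Hilbert space, C ⊆ H a nonempty closed convex set, B : H → H a bounded linear operator, and E : [0,∞) → H right-differentiable at t = 0 with derivative E'(0). Define u(t) := proj_C(E(t)), u₀ := u(0), y := E(0) − u₀ ∈ N_C(u₀), and v(t) := u(t) + t B(u(t)) for t ≥ 0. Assume C is polyhedric at u₀ for y, and set S := T_C(u₀) ∩ (ℝy)^⊥. Then the map t ↦ v(t) is right-differentiable at t = 0, its derivative is v'(0) = proj_S(E'(0)) + B(u₀), it belongs to the translated cone S + B(u₀), and it is the unique element w of S + B(u₀) satisfying the variational inequality ⟨E'(0) + B(u₀) − w, φ − w⟩ ≤ 0 for all φ ∈ S + B(u₀). -/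

import Mathlib

open Filter Topology
open scoped RealInnerProductSpace

/-- The tangent cone to a convex set `C` at `x`:
the closure of `{z | ∃ λ > 0, x + λ z ∈ C}`. -/
def tangentConeSet {H : Type*} [NormedAddCommGroup H] [InnerProductSpace ℝ H]
    (C : Set H) (x : H) : Set H :=
  closure {z | ∃ l : ℝ, 0 < l ∧ x + l • z ∈ C}

/-- `C` is polyhedric at `x ∈ C` for `y ∈ N_C(x)` if
`T_C(x) ∩ (ℝy)^⊥ = closure ({z | ∃ λ > 0, x + λ z ∈ C} ∩ (ℝy)^⊥)`. -/
def Polyhedric {H : Type*} [NormedAddCommGroup H] [InnerProductSpace ℝ H]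
    (C : Set H) (x y : H) : Prop :=
  tangentConeSet C x ∩ {z | ⟪z, y⟫ = 0}
    = closure ({z | ∃ l : ℝ, 0 < l ∧ x + l • z ∈ C} ∩ {z | ⟪z, y⟫ = 0})

/-- `IsProj C x u` means `u` is the metric projection of `x` onto `C`:
`u ∈ C` and `u` is at minimal distance from `x` among points of `C`. -/
def IsProj {H : Type*} [NormedAddCommGroup H] [InnerProductSpace ℝ H]
    (C : Set H) (x u : H) : Prop :=
  u ∈ C ∧ ∀ w ∈ C, ‖x - u‖ ≤ ‖x - w‖

/-!
Write `u t = u₀ + t • W t` and `E t = E 0 + t • Z t`, and let `y = E 0 - u₀`. The variational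
inequality of the projection at time `t`, tested at `u₀ + t • φ` for a feasible direction
`φ ⊥ y`, gives `⟪Z t - W t, φ - W t⟫ ≤ 0`; tested at `u₀`, together with the inequality at time
`0`, it gives `‖W t‖ ≤ ‖Z t‖` and `|⟪y, W t⟫| ≤ t ‖Z t‖²`. Polyhedricity supplies such `φ`
arbitrarily close to `p = proj_S E'`, and the bipolar theorem puts `p - E'`, which lies in the
dual cone of `S`, in the closure of `T_C(u₀)* + ℝ y`. Expanding `‖W t - p‖²` against these
approximations makes it eventually `O(δ)` for every `δ > 0`, so `W t → p`; the term
`t • B (u t)` only contributes `B u₀`.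
-/

section LimitLemmas

variable {F : Type*} [NormedAddCommGroup F]

theorem tendsto_of_forall_eventually_norm_sub_sq_le {α : Type*} {l : Filter α} {f : α → F}
    {p : F} {K : ℝ} (h : ∀ δ > 0, ∀ᶠ a in l, ‖f a - p‖ ^ 2 ≤ K * δ) : Tendsto f l (𝓝 p) := by
  rw [Metric.tendsto_nhds]
  intro ε hε
  have hK : 0 < |K| + 1 := by positivity
  filter_upwards [h (ε ^ 2 / (|K| + 1)) (by positivity)] with a ha
  rw [dist_eq_norm]
  refine lt_of_pow_lt_pow_left₀ 2 hε.le (ha.trans_lt ?_)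
  calc K * (ε ^ 2 / (|K| + 1)) ≤ |K| * (ε ^ 2 / (|K| + 1)) := by
        gcongr; exact le_abs_self K
    _ < ε ^ 2 := by
        rw [mul_div_assoc', div_lt_iff₀ hK]; nlinarith [sq_pos_of_pos hε]

variable [NormedSpace ℝ F]

theorem add_smul_one_div_smul_sub {t : ℝ} (ht : t ≠ 0) (a b : F) :
    a + t • ((1 / t) • (b - a)) = b := by
  rw [smul_smul, mul_one_div_cancel ht, one_smul, add_sub_cancel]

theorem tendsto_of_tendsto_slope {u : ℝ → F} {p : F}
    (hu : Tendsto (fun t => (1 / t) • (u t - u 0)) (𝓝[>] 0) (𝓝 p)) :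
    Tendsto u (𝓝[>] 0) (𝓝 (u 0)) := by
  have h := (tendsto_const_nhds (x := u 0)).add
    ((tendsto_id.mono_left nhdsWithin_le_nhds).smul hu)
  rw [zero_smul, add_zero] at h
  refine h.congr' ?_
  filter_upwards [self_mem_nhdsWithin] with t ht
  exact add_smul_one_div_smul_sub (ne_of_gt ht) _ _

theorem tendsto_slope_add_smul_apply {u : ℝ → F} {p : F} {g : F → F}
    (hu : Tendsto (fun t => (1 / t) • (u t - u 0)) (𝓝[>] 0) (𝓝 p))
    (hg : ContinuousAt g (u 0)) :
    Tendsto (fun t => (1 / t) • ((u t + t • g (u t)) - u 0)) (𝓝[>] 0)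
      (𝓝 (p + g (u 0))) := by
  refine (hu.add (hg.tendsto.comp (tendsto_of_tendsto_slope hu))).congr' ?_
  filter_upwards [self_mem_nhdsWithin] with t ht
  rw [Function.comp_apply, add_sub_right_comm, smul_add, smul_smul,
    one_div_mul_cancel (ne_of_gt ht), one_smul]

end LimitLemmas

section HilbertSpace

open Set ProperCone

variable {H : Type*} [NormedAddCommGroup H] [InnerProductSpace ℝ H]

section Projection

variable {s : Set H} {x p : H}

theorem isProj_iff_inner_le_zero (hs : Convex ℝ s) :
    IsProj s x p ↔ p ∈ s ∧ ∀ w ∈ s, ⟪x - p, w - p⟫ ≤ 0 := by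
  refine and_congr_right fun hp => ?_
  rw [← norm_eq_iInf_iff_real_inner_le_zero hs hp]
  have : Nonempty s := ⟨⟨p, hp⟩⟩
  have hbdd : BddBelow (range fun w : s => ‖x - w‖) := ⟨0, by rintro _ ⟨w, rfl⟩; positivity⟩
  exact ⟨fun h => le_antisymm (le_ciInf fun w => h w w.2) (ciInf_le hbdd ⟨p, hp⟩),
    fun h w hw => h ▸ ciInf_le hbdd ⟨w, hw⟩⟩

theorem exists_isProj [CompleteSpace H] (hne : s.Nonempty) (hcl : IsClosed s)
    (hs : Convex ℝ s) (x : H) : ∃ p, IsProj s x p := by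
  obtain ⟨p, hp, hmin⟩ := exists_norm_eq_iInf_of_complete_convex hne hcl.isComplete hs x
  exact ⟨p, (isProj_iff_inner_le_zero hs).2
    ⟨hp, (norm_eq_iInf_iff_real_inner_le_zero hs hp).1 hmin⟩⟩

theorem eq_of_inner_sub_le_zero {q : H} (hp : p ∈ s) (hq : q ∈ s)
    (hpx : ∀ w ∈ s, ⟪x - p, w - p⟫ ≤ 0) (hqx : ∀ w ∈ s, ⟪x - q, w - q⟫ ≤ 0) : p = q := by
  have h : ⟪p - q, p - q⟫ = ⟪x - p, q - p⟫ + ⟪x - q, p - q⟫ := by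
    simp only [inner_sub_left, inner_sub_right, real_inner_comm]; ring
  exact sub_eq_zero.1 (real_inner_self_nonpos.1 (h ▸ add_nonpos (hpx q hq) (hqx p hp)))

theorem forall_mem_image_add_right_inner_le_zero_iff {b w : H} :
    (∀ φ ∈ (fun z => z + b) '' s, ⟪x + b - (w + b), φ - (w + b)⟫ ≤ 0) ↔
      ∀ φ ∈ s, ⟪x - w, φ - w⟫ ≤ 0 := by
  simp only [forall_mem_image, add_sub_add_right_eq_sub]

theorem IsProj.inner_eq_zero_and_sub_mem_innerDual [CompleteSpace H] {K : ProperCone ℝ H}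
    (h : IsProj K x p) :
    ⟪x - p, p⟫ = 0 ∧ p - x ∈ innerDual (K : Set H) := by
  obtain ⟨hp, hvi⟩ := (isProj_iff_inner_le_zero K.convex).1 h
  have h2 := hvi ((2 : ℝ) • p) (K.smul_mem hp zero_le_two)
  have h0 := hvi 0 K.zero_mem
  rw [two_smul, add_sub_cancel_right] at h2
  rw [zero_sub, inner_neg_right, neg_nonpos] at h0
  have horth : ⟪x - p, p⟫ = 0 := le_antisymm h2 h0
  refine ⟨horth, mem_innerDual.2 fun w hw => ?_⟩
  have := hvi w hw
  rw [inner_sub_right, horth, sub_zero] at this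
  rw [← neg_sub x p, inner_neg_right, real_inner_comm]
  linarith

end Projection

section Cones

variable {C : Set H} {x : H}

theorem Convex.add_smul_mem_of_le (hC : Convex ℝ C) (hx : x ∈ C) {z : H} {l m : ℝ}
    (hl : 0 < l) (hz : x + l • z ∈ C) (hm : 0 ≤ m) (hml : m ≤ l) : x + m • z ∈ C := by
  have := hC.add_smul_mem hx hz ⟨div_nonneg hm hl.le, (div_le_one hl).2 hml⟩
  rwa [smul_smul, div_mul_cancel₀ m hl.ne'] at this

def radialCone (hC : Convex ℝ C) (hx : x ∈ C) : PointedCone ℝ H where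
  carrier := {z | ∃ l : ℝ, 0 < l ∧ x + l • z ∈ C}
  zero_mem' := ⟨1, one_pos, by simpa using hx⟩
  add_mem' := by
    rintro z z' ⟨l, hl, hz⟩ ⟨l', hl', hz'⟩
    have hμ : 0 < min l l' := lt_min hl hl'
    have h := hC (hC.add_smul_mem_of_le hx hl hz hμ.le (min_le_left l l'))
      (hC.add_smul_mem_of_le hx hl' hz' hμ.le (min_le_right l l'))
      (by norm_num : (0 : ℝ) ≤ 1 / 2) (by norm_num : (0 : ℝ) ≤ 1 / 2) (by norm_num)
    refine ⟨min l l' / 2, half_pos hμ, ?_⟩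
    convert h using 1
    module
  smul_mem' := by
    rintro c z ⟨l, hl, hz⟩
    rcases eq_or_lt_of_le c.2 with hc | hc
    · refine ⟨1, one_pos, ?_⟩
      rw [← Nonneg.coe_smul, ← hc, zero_smul, smul_zero, add_zero]
      exact hx
    · refine ⟨l / c, div_pos hl hc, ?_⟩
      rwa [← Nonneg.coe_smul, smul_smul, div_mul_cancel₀ l hc.ne']

def tangentCone (hC : Convex ℝ C) (hx : x ∈ C) : ProperCone ℝ H :=
  Submodule.closure (radialCone hC hx)

variable [CompleteSpace H]

theorem mem_innerDual_pair_neg {y z : H} : z ∈ innerDual {y, -y} ↔ ⟪z, y⟫ = 0 := by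
  simp only [mem_innerDual, mem_insert_iff, mem_singleton_iff, forall_eq_or_imp, forall_eq,
    inner_neg_left, neg_nonneg, real_inner_comm y z]
  exact ⟨fun h => le_antisymm h.2 h.1, fun h => ⟨h.ge, h.le⟩⟩

theorem coe_tangentCone_inf_innerDual (hC : Convex ℝ C) (hx : x ∈ C) (y : H) :
    ((tangentCone hC hx ⊓ innerDual {y, -y} : ProperCone ℝ H) : Set H) =
      tangentConeSet C x ∩ {z | ⟪z, y⟫ = 0} := by
  ext z
  exact and_congr Iff.rfl mem_innerDual_pair_neg

theorem exists_innerDual_add_smul_near (T : ProperCone ℝ H) {y g : H}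
    (hg : g ∈ innerDual ((T ⊓ innerDual {y, -y} : ProperCone ℝ H) : Set H)) {δ : ℝ}
    (hδ : 0 < δ) : ∃ m ∈ innerDual (T : Set H), ∃ β : ℝ, ‖g - (m + β • y)‖ < δ := by
  set D : ProperCone ℝ H :=
    Submodule.closure ((innerDual (T : Set H)).toPointedCone ⊔ PointedCone.hull ℝ {y, -y})
  -- `D` is a proper cone, so it is its own bidual, and its dual lies in `T ⊓ y^⊥`.
  have hgD : g ∈ D := by
    rw [← innerDual_innerDual D]
    intro z hz
    refine hg ⟨?_, ?_⟩
    · rw [← innerDual_innerDual T]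
      exact fun m hm => hz (subset_closure (Submodule.mem_sup_left hm))
    · exact fun w hw => hz (subset_closure (Submodule.mem_sup_right (Submodule.subset_span hw)))
  obtain ⟨q, hq, hgq⟩ := Metric.mem_closure_iff.1 hgD δ hδ
  obtain ⟨m, hm, k, hk, rfl⟩ := Submodule.mem_sup.1 hq
  obtain ⟨a, b, rfl⟩ := Submodule.mem_span_pair.1 hk
  refine ⟨m, hm, (a : ℝ) - b, ?_⟩
  rw [← dist_eq_norm, sub_smul, Nonneg.coe_smul, Nonneg.coe_smul, sub_eq_add_neg, ← smul_neg]
  exact hgq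

end Cones

section DifferenceQuotient

variable {C : Set H} {e u Z W : H} {t : ℝ}

theorem inner_add_mul_inner_le_zero_of_isProj (hC : Convex ℝ C)
    (h1 : IsProj C (e + t • Z) (u + t • W)) (ht : 0 < t) {φ : H} (hφ : u + t • φ ∈ C) :
    ⟪e - u, φ - W⟫ + t * ⟪Z - W, φ - W⟫ ≤ 0 := by
  have h := ((isProj_iff_inner_le_zero hC).1 h1).2 _ hφ
  have e1 : e + t • Z - (u + t • W) = (e - u) + t • (Z - W) := by module
  have e2 : u + t • φ - (u + t • W) = t • (φ - W) := by module
  rw [e1, e2, inner_add_left, real_inner_smul_right, real_inner_smul_left,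
    real_inner_smul_right] at h
  have : t * (⟪e - u, φ - W⟫ + t * ⟪Z - W, φ - W⟫) ≤ 0 := by linarith
  exact nonpos_of_mul_nonpos_right this ht

theorem inner_le_zero_of_isProj_add_smul (hC : Convex ℝ C) (h0 : IsProj C e u)
    (h1 : IsProj C (e + t • Z) (u + t • W)) (ht : 0 < t) : ⟪e - u, W⟫ ≤ 0 := by
  have h := ((isProj_iff_inner_le_zero hC).1 h0).2 _ h1.1
  rw [add_sub_cancel_left, real_inner_smul_right] at h
  exact nonpos_of_mul_nonpos_right h ht

theorem inner_sub_le_zero_of_isProj_add_smul (hC : Convex ℝ C) (h0 : IsProj C e u)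
    (h1 : IsProj C (e + t • Z) (u + t • W)) (ht : 0 < t) {φ : H} (hφ : ⟪φ, e - u⟫ = 0)
    (hφC : u + t • φ ∈ C) : ⟪Z - W, φ - W⟫ ≤ 0 := by
  have h := inner_add_mul_inner_le_zero_of_isProj hC h1 ht hφC
  rw [inner_sub_right, real_inner_comm, hφ] at h
  have := inner_le_zero_of_isProj_add_smul hC h0 h1 ht
  nlinarith

theorem norm_le_of_isProj_add_smul (hC : Convex ℝ C) (h0 : IsProj C e u)
    (h1 : IsProj C (e + t • Z) (u + t • W)) (ht : 0 < t) : ‖W‖ ≤ ‖Z‖ := by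
  have h := inner_sub_le_zero_of_isProj_add_smul hC h0 h1 ht (φ := 0) (inner_zero_left _)
    (by simpa using h0.1)
  rw [zero_sub, inner_neg_right, neg_nonpos, inner_sub_left, sub_nonneg,
    real_inner_self_eq_norm_sq] at h
  have := real_inner_le_norm Z W
  nlinarith [norm_nonneg W, norm_nonneg Z]

theorem abs_inner_le_of_isProj_add_smul (hC : Convex ℝ C) (h0 : IsProj C e u)
    (h1 : IsProj C (e + t • Z) (u + t • W)) (ht : 0 < t) : |⟪e - u, W⟫| ≤ t * ‖Z‖ ^ 2 := by
  have h := inner_add_mul_inner_le_zero_of_isProj hC h1 ht (φ := 0) (by simpa using h0.1)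
  rw [zero_sub, inner_neg_right, inner_neg_right, inner_sub_left Z W W,
    real_inner_self_eq_norm_sq] at h
  have hZW := real_inner_le_norm Z W
  have hWZ := norm_le_of_isProj_add_smul hC h0 h1 ht
  have hup := inner_le_zero_of_isProj_add_smul hC h0 h1 ht
  rw [abs_le]
  constructor
  · nlinarith [norm_nonneg W, norm_nonneg Z, mul_le_mul_of_nonneg_left hWZ (norm_nonneg Z)]
  · nlinarith [sq_nonneg ‖Z‖]

theorem norm_sub_sq_le_of_isProj_add_smul (hC : Convex ℝ C) (h0 : IsProj C e u)
    (h1 : IsProj C (e + t • Z) (u + t • W)) (ht : 0 < t) {E' p φ m : H} {β M : ℝ}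
    (hp : ⟪E' - p, p⟫ = 0) (hφ : ⟪φ, e - u⟫ = 0) (hφC : u + t • φ ∈ C) (hm : 0 ≤ ⟪W, m⟫)
    (hZM : ‖Z‖ ≤ M) (hpM : ‖p‖ ≤ M) :
    ‖W - p‖ ^ 2 ≤ 2 * M * ‖p - φ‖ + 2 * M * ‖Z - E'‖
      + M * ‖(p - E') - (m + β • (e - u))‖ + |β| * t * M ^ 2 := by
  have hWM : ‖W‖ ≤ M := (norm_le_of_isProj_add_smul hC h0 h1 ht).trans hZM
  have hWp : ‖W - p‖ ≤ 2 * M := (norm_sub_le W p).trans (by linarith)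
  have hZW : ‖Z - W‖ ≤ 2 * M := (norm_sub_le Z W).trans (by linarith)
  have hfirst : ⟪W - Z, W - p⟫ ≤ 2 * M * ‖p - φ‖ := by
    have hsplit : ⟪W - Z, W - p⟫ = ⟪Z - W, φ - W⟫ + ⟪Z - W, p - φ⟫ := by
      rw [← inner_add_right, ← inner_neg_neg, neg_sub, neg_sub]; abel_nf
    have := inner_sub_le_zero_of_isProj_add_smul hC h0 h1 ht hφ hφC
    have := (real_inner_le_norm (Z - W) (p - φ)).trans
      (mul_le_mul_of_nonneg_right hZW (norm_nonneg _))
    linarith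
  have hsecond : ⟪Z - E', W - p⟫ ≤ 2 * M * ‖Z - E'‖ :=
    (real_inner_le_norm _ _).trans
      (by rw [mul_comm]; exact mul_le_mul_of_nonneg_right hWp (norm_nonneg _))
  have hthird : ⟪E' - p, W - p⟫ ≤ M * ‖(p - E') - (m + β • (e - u))‖ + |β| * t * M ^ 2 := by
    have hsplit : ⟪E' - p, W - p⟫ =
        -⟪(p - E') - (m + β • (e - u)), W⟫ - ⟪W, m⟫ - β * ⟪e - u, W⟫ := by
      rw [inner_sub_right, hp, real_inner_comm m W]
      simp only [inner_sub_left, inner_add_left, real_inner_smul_left]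
      ring
    have hdist :=
      (neg_le_abs _).trans (abs_real_inner_le_norm ((p - E') - (m + β • (e - u))) W)
    have hy : -(β * ⟪e - u, W⟫) ≤ |β| * (t * M ^ 2) := by
      refine (neg_le_abs _).trans ?_
      rw [abs_mul]
      gcongr
      exact (abs_inner_le_of_isProj_add_smul hC h0 h1 ht).trans (by gcongr)
    nlinarith [mul_le_mul_of_nonneg_left hWM (norm_nonneg ((p - E') - (m + β • (e - u))))]
  have hsum : ‖W - p‖ ^ 2 = ⟪W - Z, W - p⟫ + ⟪Z - E', W - p⟫ + ⟪E' - p, W - p⟫ := by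
    rw [← real_inner_self_eq_norm_sq, ← inner_add_left, ← inner_add_left]
    abel_nf
  linarith

end DifferenceQuotient

theorem tendsto_slope_of_isProj_of_polyhedric [CompleteSpace H] {C : Set H} (hC : Convex ℝ C)
    {E : ℝ → H} {E' : H} (hE' : Tendsto (fun t => (1 / t) • (E t - E 0)) (𝓝[>] 0) (𝓝 E'))
    {u : ℝ → H} (hu : ∀ t, 0 ≤ t → IsProj C (E t) (u t))
    (hpoly : Polyhedric C (u 0) (E 0 - u 0)) {p : H}
    (hp : IsProj (tangentConeSet C (u 0) ∩ {z | ⟪z, E 0 - u 0⟫ = 0}) E' p) :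
    Tendsto (fun t => (1 / t) • (u t - u 0)) (𝓝[>] 0) (𝓝 p) := by
  have hu0 := (hu 0 le_rfl).1
  set y := E 0 - u 0
  set T := tangentCone hC hu0
  obtain ⟨hpp, hpS⟩ :=
    (coe_tangentCone_inf_innerDual hC hu0 y ▸ hp).inner_eq_zero_and_sub_mem_innerDual
  set M := ‖E'‖ + ‖p‖ + 1
  refine tendsto_of_forall_eventually_norm_sub_sq_le (K := 5 * M + M ^ 2) fun δ hδ => ?_
  obtain ⟨φ, ⟨⟨l, hl, hφC⟩, hφ⟩, hpφ⟩ := Metric.mem_closure_iff.1 (hpoly ▸ hp.1) δ hδ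
  obtain ⟨m, hm, β, hmβ⟩ := exists_innerDual_add_smul_near T hpS hδ
  have hE'δ := Metric.tendsto_nhds.1 hE' δ hδ
  have hE'1 := Metric.tendsto_nhds.1 hE' 1 one_pos
  have htl : ∀ᶠ t in 𝓝[>] (0 : ℝ), t < l :=
    eventually_nhdsWithin_of_eventually_nhds (gt_mem_nhds hl)
  have htβ : ∀ᶠ t in 𝓝[>] (0 : ℝ), |β| * t < δ := by
    have : Tendsto (fun t : ℝ => |β| * t) (𝓝 0) (𝓝 0) := by
      simpa using (tendsto_id (x := 𝓝 (0 : ℝ))).const_mul |β|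
    exact eventually_nhdsWithin_of_eventually_nhds (this.eventually (gt_mem_nhds hδ))
  filter_upwards [self_mem_nhdsWithin, hE'δ, hE'1, htl, htβ] with t ht hZδ hZ1 htl htβ
  set Z := (1 / t) • (E t - E 0)
  set W := (1 / t) • (u t - u 0)
  have h1 : IsProj C (E 0 + t • Z) (u 0 + t • W) := by
    rw [add_smul_one_div_smul_sub (ne_of_gt ht), add_smul_one_div_smul_sub (ne_of_gt ht)]
    exact hu t (le_of_lt ht)
  have hWT : W ∈ T := subset_closure ⟨t, ht, h1.1⟩
  rw [dist_eq_norm] at hZδ hZ1 hpφ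
  have hZM : ‖Z‖ ≤ M := by
    have := norm_le_norm_add_norm_sub' Z E'
    linarith [norm_nonneg p]
  have key := norm_sub_sq_le_of_isProj_add_smul hC (hu 0 le_rfl) h1 ht hpp hφ
    (hC.add_smul_mem_of_le hu0 hl hφC (le_of_lt ht) (le_of_lt htl)) (hm hWT) hZM
    (by linarith [norm_nonneg E']) (β := β)
  calc ‖W - p‖ ^ 2 ≤ _ := key
    _ ≤ 2 * M * δ + 2 * M * δ + M * δ + δ * M ^ 2 := by gcongr
    _ = (5 * M + M ^ 2) * δ := by ring

end HilbertSpace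

theorem statement9_general
    {H : Type*} [NormedAddCommGroup H] [InnerProductSpace ℝ H] [CompleteSpace H]
    (C : Set H) (hconv : Convex ℝ C)
    (B : H →L[ℝ] H)
    (E : ℝ → H) (E' : H)
    (hE' : Tendsto (fun t : ℝ => (1 / t) • (E t - E 0))
      (nhdsWithin 0 (Set.Ioi 0)) (nhds E'))
    (u : ℝ → H)
    (hu : ∀ t : ℝ, 0 ≤ t → IsProj C (E t) (u t))
    (hpoly : Polyhedric C (u 0) (E 0 - u 0)) :
    ∃ v' : H,
      Tendsto (fun t : ℝ => (1 / t) • ((u t + t • B (u t)) - u 0))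
        (nhdsWithin 0 (Set.Ioi 0)) (nhds v')
      ∧ (∃ p : H,
          IsProj (tangentConeSet C (u 0) ∩ {z | ⟪z, E 0 - u 0⟫ = 0}) E' p
          ∧ v' = p + B (u 0))
      ∧ v' ∈ (fun s => s + B (u 0)) ''
          (tangentConeSet C (u 0) ∩ {z | ⟪z, E 0 - u 0⟫ = 0})
      ∧ (∀ φ ∈ (fun s => s + B (u 0)) ''
            (tangentConeSet C (u 0) ∩ {z | ⟪z, E 0 - u 0⟫ = 0}),
          ⟪E' + B (u 0) - v', φ - v'⟫ ≤ 0)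
      ∧ (∀ w ∈ (fun s => s + B (u 0)) ''
            (tangentConeSet C (u 0) ∩ {z | ⟪z, E 0 - u 0⟫ = 0}),
          (∀ φ ∈ (fun s => s + B (u 0)) ''
              (tangentConeSet C (u 0) ∩ {z | ⟪z, E 0 - u 0⟫ = 0}),
            ⟪E' + B (u 0) - w, φ - w⟫ ≤ 0) → w = v') := by
  have hu0 := (hu 0 le_rfl).1
  set K := tangentCone hconv hu0 ⊓ ProperCone.innerDual {E 0 - u 0, -(E 0 - u 0)}
  have hK := coe_tangentCone_inf_innerDual hconv hu0 (E 0 - u 0)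
  rw [← hK]
  obtain ⟨p, hp⟩ := exists_isProj K.nonempty K.isClosed K.convex E'
  have hvi := ((isProj_iff_inner_le_zero K.convex).1 hp).2
  refine ⟨p + B (u 0), ?_, ⟨p, hp, rfl⟩, ⟨p, hp.1, rfl⟩, ?_, ?_⟩
  · exact tendsto_slope_add_smul_apply
      (tendsto_slope_of_isProj_of_polyhedric hconv hE' hu hpoly (hK ▸ hp))
      B.continuous.continuousAt
  · exact forall_mem_image_add_right_inner_le_zero_iff.2 hvi
  · rintro _ ⟨s, hs, rfl⟩ hw
    rw [eq_of_inner_sub_le_zero hs hp.1 (forall_mem_image_add_right_inner_le_zero_iff.1 hw) hvi]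

/-- Let `C ⊆ H` be nonempty closed convex, `B : H → H` a bounded
linear operator, `E : [0,∞) → H` right-differentiable at `t = 0` with
derivative `E'(0)`, `u(t) := proj_C(E(t))`, `u₀ := u(0)`, `y := E(0) − u₀`,
and `v(t) := u(t) + t B(u(t))`. If `C` is polyhedric at `u₀` for `y`, and
`S := T_C(u₀) ∩ (ℝy)^⊥`, then `v` is right-differentiable at `t = 0`, its
derivative is `v'(0) = proj_S(E'(0)) + B(u₀)`, it belongs to the translated
cone `S + B(u₀)`, and it is the unique element `w` of `S + B(u₀)` satisfying
`⟪E'(0) + B(u₀) − w, φ − w⟫ ≤ 0` for all `φ ∈ S + B(u₀)`. -/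
theorem statement9
    {H : Type*} [NormedAddCommGroup H] [InnerProductSpace ℝ H] [CompleteSpace H]
    (C : Set H) (hne : C.Nonempty) (hcl : IsClosed C) (hconv : Convex ℝ C)
    (B : H →L[ℝ] H)
    (E : ℝ → H) (E' : H)
    (hE' : Tendsto (fun t : ℝ => (1 / t) • (E t - E 0))
      (nhdsWithin 0 (Set.Ioi 0)) (nhds E'))
    (u : ℝ → H)
    (hu : ∀ t : ℝ, 0 ≤ t → IsProj C (E t) (u t))
    (hpoly : Polyhedric C (u 0) (E 0 - u 0)) :
    ∃ v' : H,
      Tendsto (fun t : ℝ => (1 / t) • ((u t + t • B (u t)) - u 0))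
        (nhdsWithin 0 (Set.Ioi 0)) (nhds v')
      ∧ (∃ p : H,
          IsProj (tangentConeSet C (u 0) ∩ {z | ⟪z, E 0 - u 0⟫ = 0}) E' p
          ∧ v' = p + B (u 0))
      ∧ v' ∈ (fun s => s + B (u 0)) ''
          (tangentConeSet C (u 0) ∩ {z | ⟪z, E 0 - u 0⟫ = 0})
      ∧ (∀ φ ∈ (fun s => s + B (u 0)) ''
            (tangentConeSet C (u 0) ∩ {z | ⟪z, E 0 - u 0⟫ = 0}),
          ⟪E' + B (u 0) - v', φ - v'⟫ ≤ 0)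
      ∧ (∀ w ∈ (fun s => s + B (u 0)) ''
            (tangentConeSet C (u 0) ∩ {z | ⟪z, E 0 - u 0⟫ = 0}),
          (∀ φ ∈ (fun s => s + B (u 0)) ''
              (tangentConeSet C (u 0) ∩ {z | ⟪z, E 0 - u 0⟫ = 0}),
            ⟪E' + B (u 0) - w, φ - w⟫ ≤ 0) → w = v') :=
  statement9_general C hconv B E E' hE' u hu hpoly
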